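/- Under assumptions (A1)–(A4) with μ > 2, for every (f1,f2), (g1,g2) ∈ 𝒦 and every η ∈ [s0,r0] one has |G1(η; f1,f2) − G1(η; g1,g2)| ≤ G̃1·‖(f1,f2) − (g1,g2)‖, where G̃1 = H1sup·Φ̃1 + H̃1/(L1m·(μ+ν−1)·s0^(μ+ν−1)), H1sup = K1M/(E1inf·(μ+ν−1)·s0^(μ+ν−1)), Φ̃1 = Ẽ1/(L1m·(μ+ν−1)·s0^(μ+ν−1)) + L̃1/(L1m²·(2μ+ν−1)·s0^(2μ+ν−1)), H̃1 = (K̃1 + K1M·Ẽ1/E1inf)/(E1inf·(μ+ν−1)·s0^(μ+ν−1)), E1inf = exp(−[a·N1M/(L1m·(μ−1)·s0^(2μ−2)) + D1·K1M/(H_inf·L1m·(2μ+ν−1)·s0^(2μ+ν−1))]), Ẽ1 = 2a·[Ñ1/(L1m·(μ−2)·s0^(μ−2)) + N1M·L̃1/(L1m²·(3μ−2)·s0^(3μ−2))] + D1·[K̃1/(H_inf·L1m·(2μ+ν−1)·s0^(2μ+ν−1)) + (K1M/(H_inf·L1m))·(H̃/(H_inf·(2μ+ν−1)·s0^(2μ+ν−1))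 + L̃1/(L1m·(3μ+ν−1)·s0^(3μ+ν−1)))], H_inf = (K1m/(μ+ν−1))·(s0^(−(μ+ν−1)) − r0^(−(μ+ν−1))), and H̃ = (K̃1·s0^(−(μ+ν−1)) + K̃2·r0^(−(μ+ν−1)))/(μ+ν−1). -/

import Mathlib

open MeasureTheory Filter Topology

noncomputable section

/-- The bundle of fixed constants of the problem. -/
structure Cst where
  nu : ℝ
  mu : ℝ
  a : ℝ
  D1 : ℝ
  D2 : ℝ
  Q : ℝ
  D1s : ℝ
  D2s : ℝ
  L1m : ℝ
  L1M : ℝ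
  N1m : ℝ
  N1M : ℝ
  K1m : ℝ
  K1M : ℝ
  L2m : ℝ
  L2M : ℝ
  N2m : ℝ
  N2M : ℝ
  K2m : ℝ
  K2M : ℝ
  Lt1 : ℝ
  Nt1 : ℝ
  Kt1 : ℝ
  Lt2 : ℝ
  Nt2 : ℝ
  Kt2 : ℝ

/-- The space `C[s0,r0]`, modeled as real functions continuous on `[s0,r0]`. -/
def C1 (s0 r0 : ℝ) : Set (ℝ → ℝ) := {f | ContinuousOn f (Set.Icc s0 r0)}

/-- The set `ℳ ⊆ C_b[r0,∞)`: bounded continuous functions on `[r0,∞)` with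
`f(r0) = 0` and `f(η) → -1` as `η → ∞`. -/
def Mset (r0 : ℝ) : Set (ℝ → ℝ) :=
  {f | ContinuousOn f (Set.Ici r0) ∧ (∃ C, ∀ x ∈ Set.Ici r0, |f x| ≤ C) ∧
    f r0 = 0 ∧ Tendsto f atTop (𝓝 (-1))}

/-- Sup norm of `f` over the set `S`. -/
def supOn (S : Set ℝ) (f : ℝ → ℝ) : ℝ := ⨆ x : S, |f x.1|

/-- Norm of the difference of two pairs in `𝒦 = C[s0,r0] × ℳ`. -/
def pairNorm (s0 r0 : ℝ) (f1 f2 g1 g2 : ℝ → ℝ) : ℝ :=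
  max (supOn (Set.Icc s0 r0) (f1 - g1)) (supOn (Set.Ici r0) (f2 - g2))

/-- Positivity assumptions on all the fixed constants and on `s0, r0`. -/
def PosC (c : Cst) (s0 r0 : ℝ) : Prop :=
  0 < c.a ∧ 0 < c.nu ∧ c.nu < 1 ∧ 2 < c.mu ∧ 0 < s0 ∧ s0 < r0 ∧
  0 < c.D1 ∧ 0 < c.D2 ∧ 0 < c.Q ∧ 0 < c.D1s ∧ 0 < c.D2s ∧
  0 < c.L1m ∧ 0 < c.L1M ∧ 0 < c.N1m ∧ 0 < c.N1M ∧ 0 < c.K1m ∧ 0 < c.K1M ∧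
  0 < c.L2m ∧ 0 < c.L2M ∧ 0 < c.N2m ∧ 0 < c.N2M ∧ 0 < c.K2m ∧ 0 < c.K2M ∧
  0 < c.Lt1 ∧ 0 < c.Nt1 ∧ 0 < c.Kt1 ∧ 0 < c.Lt2 ∧ 0 < c.Nt2 ∧ 0 < c.Kt2

/-- Positivity assumptions on all the fixed constants (no `s0, r0`). -/
def PosCst (c : Cst) : Prop :=
  0 < c.a ∧ 0 < c.nu ∧ c.nu < 1 ∧ 2 < c.mu ∧
  0 < c.D1 ∧ 0 < c.D2 ∧ 0 < c.Q ∧ 0 < c.D1s ∧ 0 < c.D2s ∧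
  0 < c.L1m ∧ 0 < c.L1M ∧ 0 < c.N1m ∧ 0 < c.N1M ∧ 0 < c.K1m ∧ 0 < c.K1M ∧
  0 < c.L2m ∧ 0 < c.L2M ∧ 0 < c.N2m ∧ 0 < c.N2M ∧ 0 < c.K2m ∧ 0 < c.K2M ∧
  0 < c.Lt1 ∧ 0 < c.Nt1 ∧ 0 < c.Kt1 ∧ 0 < c.Lt2 ∧ 0 < c.Nt2 ∧ 0 < c.Kt2

/-- Assumptions (A1)–(A4): continuity of the images of `L, N, K`, the two-sided
bounds and the Lipschitz bounds. -/
def Assum (c : Cst) (s0 r0 : ℝ) (L1 N1 K1 L2 N2 K2 : (ℝ → ℝ) → ℝ → ℝ) : Prop :=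
  (∀ f1 ∈ C1 s0 r0,
    ContinuousOn (L1 f1) (Set.Icc s0 r0) ∧ ContinuousOn (N1 f1) (Set.Icc s0 r0) ∧
      ContinuousOn (K1 f1) (Set.Icc s0 r0)) ∧
  (∀ f2 ∈ Mset r0,
    ContinuousOn (L2 f2) (Set.Ici r0) ∧ ContinuousOn (N2 f2) (Set.Ici r0) ∧
      ContinuousOn (K2 f2) (Set.Ici r0)) ∧
  (∀ f1 ∈ C1 s0 r0, ∀ η ∈ Set.Icc s0 r0,
    c.L1m * η ^ c.mu ≤ L1 f1 η ∧ L1 f1 η ≤ c.L1M * η ^ c.mu ∧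
    c.N1m * η ^ (-c.mu) ≤ N1 f1 η ∧ N1 f1 η ≤ c.N1M * η ^ (-c.mu) ∧
    c.K1m * η ^ (-c.mu) ≤ K1 f1 η ∧ K1 f1 η ≤ c.K1M * η ^ (-c.mu)) ∧
  (∀ f2 ∈ Mset r0, ∀ η ∈ Set.Ici r0,
    c.L2m * η ^ c.mu ≤ L2 f2 η ∧ L2 f2 η ≤ c.L2M * η ^ c.mu ∧
    c.N2m * η ^ (-c.mu) ≤ N2 f2 η ∧ N2 f2 η ≤ c.N2M * η ^ (-c.mu) ∧
    c.K2m * η ^ (-c.mu) ≤ K2 f2 η ∧ K2 f2 η ≤ c.K2M * η ^ (-c.mu)) ∧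
  (∀ f1 ∈ C1 s0 r0, ∀ g1 ∈ C1 s0 r0, ∀ η ∈ Set.Icc s0 r0,
    |L1 f1 η - L1 g1 η| ≤ c.Lt1 * supOn (Set.Icc s0 r0) (f1 - g1) ∧
    |N1 f1 η - N1 g1 η| ≤ c.Nt1 * supOn (Set.Icc s0 r0) (f1 - g1) ∧
    |K1 f1 η - K1 g1 η| ≤ c.Kt1 * η ^ (-c.mu) * supOn (Set.Icc s0 r0) (f1 - g1)) ∧
  (∀ f2 ∈ Mset r0, ∀ g2 ∈ Mset r0, ∀ η ∈ Set.Ici r0,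
    |L2 f2 η - L2 g2 η| ≤ c.Lt2 * supOn (Set.Ici r0) (f2 - g2) ∧
    |N2 f2 η - N2 g2 η| ≤ c.Nt2 * supOn (Set.Ici r0) (f2 - g2) ∧
    |K2 f2 η - K2 g2 η| ≤ c.Kt2 * η ^ (-c.mu) * supOn (Set.Ici r0) (f2 - g2))

/-- `H(f1,f2) = ∫_{s0}^{r0} K(f1)(v)/v^ν dv + ∫_{r0}^{∞} K(f2)(v)/v^ν dv`. -/
def Hf (c : Cst) (s0 r0 : ℝ) (L1 N1 K1 L2 N2 K2 : (ℝ → ℝ) → ℝ → ℝ) (f1 f2 : ℝ → ℝ) : ℝ :=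
  (∫ v in s0..r0, K1 f1 v / v ^ c.nu) + ∫ v in Set.Ioi r0, K2 f2 v / v ^ c.nu

/-- `E1(η; f1,f2)`. -/
def E1f (c : Cst) (s0 r0 : ℝ) (L1 N1 K1 L2 N2 K2 : (ℝ → ℝ) → ℝ → ℝ) (f1 f2 : ℝ → ℝ)
    (η : ℝ) : ℝ :=
  Real.exp (-(∫ v in s0..η,
    (2 * c.a * v * (N1 f1 v / L1 f1 v)
      + c.D1 / Hf c s0 r0 L1 N1 K1 L2 N2 K2 f1 f2 * (K1 f1 v / (L1 f1 v * v ^ c.nu)))))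

/-- `Φ1(η; f1,f2)`. -/
def Phi1f (c : Cst) (s0 r0 : ℝ) (L1 N1 K1 L2 N2 K2 : (ℝ → ℝ) → ℝ → ℝ) (f1 f2 : ℝ → ℝ)
    (η : ℝ) : ℝ :=
  ∫ v in s0..η, E1f c s0 r0 L1 N1 K1 L2 N2 K2 f1 f2 v / (L1 f1 v * v ^ c.nu)

/-- `H1(η; f1,f2)`. -/
def H1f (c : Cst) (s0 r0 : ℝ) (L1 N1 K1 L2 N2 K2 : (ℝ → ℝ) → ℝ → ℝ) (f1 f2 : ℝ → ℝ)
    (η : ℝ) : ℝ :=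
  ∫ v in s0..η, K1 f1 v / (v ^ c.nu * E1f c s0 r0 L1 N1 K1 L2 N2 K2 f1 f2 v)

/-- `G1(η; f1,f2)`. -/
def G1f (c : Cst) (s0 r0 : ℝ) (L1 N1 K1 L2 N2 K2 : (ℝ → ℝ) → ℝ → ℝ) (f1 f2 : ℝ → ℝ)
    (η : ℝ) : ℝ :=
  ∫ v in s0..η, E1f c s0 r0 L1 N1 K1 L2 N2 K2 f1 f2 v
    * H1f c s0 r0 L1 N1 K1 L2 N2 K2 f1 f2 v / (L1 f1 v * v ^ c.nu)

/-- `V1(f1,f2)(η)`. -/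
def V1f (c : Cst) (s0 r0 : ℝ) (L1 N1 K1 L2 N2 K2 : (ℝ → ℝ) → ℝ → ℝ) (f1 f2 : ℝ → ℝ)
    (η : ℝ) : ℝ :=
  s0 ^ c.nu * c.Q * Real.exp (-s0 ^ 2)
      * (Phi1f c s0 r0 L1 N1 K1 L2 N2 K2 f1 f2 r0 - Phi1f c s0 r0 L1 N1 K1 L2 N2 K2 f1 f2 η)
    + c.D1s / Hf c s0 r0 L1 N1 K1 L2 N2 K2 f1 f2 ^ 2
      * (G1f c s0 r0 L1 N1 K1 L2 N2 K2 f1 f2 r0 - G1f c s0 r0 L1 N1 K1 L2 N2 K2 f1 f2 η)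

/-- `E2(η; f1,f2)`. -/
def E2f (c : Cst) (s0 r0 : ℝ) (L1 N1 K1 L2 N2 K2 : (ℝ → ℝ) → ℝ → ℝ) (f1 f2 : ℝ → ℝ)
    (η : ℝ) : ℝ :=
  Real.exp (-(∫ v in r0..η,
    (2 * c.a * v * (N2 f2 v / L2 f2 v)
      + c.D2 / Hf c s0 r0 L1 N1 K1 L2 N2 K2 f1 f2 * (K2 f2 v / (L2 f2 v * v ^ c.nu)))))

/-- `Φ2(η; f1,f2)`. -/
def Phi2f (c : Cst) (s0 r0 : ℝ) (L1 N1 K1 L2 N2 K2 : (ℝ → ℝ) → ℝ → ℝ) (f1 f2 : ℝ → ℝ)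
    (η : ℝ) : ℝ :=
  ∫ v in r0..η, E2f c s0 r0 L1 N1 K1 L2 N2 K2 f1 f2 v / (L2 f2 v * v ^ c.nu)

/-- `Φ2(∞; f1,f2)`. -/
def Phi2I (c : Cst) (s0 r0 : ℝ) (L1 N1 K1 L2 N2 K2 : (ℝ → ℝ) → ℝ → ℝ) (f1 f2 : ℝ → ℝ) : ℝ :=
  ∫ v in Set.Ioi r0, E2f c s0 r0 L1 N1 K1 L2 N2 K2 f1 f2 v / (L2 f2 v * v ^ c.nu)

/-- `H2(η; f1,f2)`. -/
def H2f (c : Cst) (s0 r0 : ℝ) (L1 N1 K1 L2 N2 K2 : (ℝ → ℝ) → ℝ → ℝ) (f1 f2 : ℝ → ℝ)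
    (η : ℝ) : ℝ :=
  ∫ v in r0..η, K2 f2 v / (v ^ c.nu * E2f c s0 r0 L1 N1 K1 L2 N2 K2 f1 f2 v)

/-- `G2(η; f1,f2)`. -/
def G2f (c : Cst) (s0 r0 : ℝ) (L1 N1 K1 L2 N2 K2 : (ℝ → ℝ) → ℝ → ℝ) (f1 f2 : ℝ → ℝ)
    (η : ℝ) : ℝ :=
  ∫ v in r0..η, E2f c s0 r0 L1 N1 K1 L2 N2 K2 f1 f2 v
    * H2f c s0 r0 L1 N1 K1 L2 N2 K2 f1 f2 v / (L2 f2 v * v ^ c.nu)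

/-- `G2(∞; f1,f2) = lim_{η→∞} G2(η; f1,f2)`. -/
def G2I (c : Cst) (s0 r0 : ℝ) (L1 N1 K1 L2 N2 K2 : (ℝ → ℝ) → ℝ → ℝ) (f1 f2 : ℝ → ℝ) : ℝ :=
  limUnder atTop (G2f c s0 r0 L1 N1 K1 L2 N2 K2 f1 f2)

/-- `V2(f1,f2)(η)`. -/
def V2f (c : Cst) (s0 r0 : ℝ) (L1 N1 K1 L2 N2 K2 : (ℝ → ℝ) → ℝ → ℝ) (f1 f2 : ℝ → ℝ)
    (η : ℝ) : ℝ :=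
  (c.D2s / Hf c s0 r0 L1 N1 K1 L2 N2 K2 f1 f2 ^ 2 * G2I c s0 r0 L1 N1 K1 L2 N2 K2 f1 f2 - 1)
      * (Phi2f c s0 r0 L1 N1 K1 L2 N2 K2 f1 f2 η / Phi2I c s0 r0 L1 N1 K1 L2 N2 K2 f1 f2)
    - c.D2s / Hf c s0 r0 L1 N1 K1 L2 N2 K2 f1 f2 ^ 2 * G2f c s0 r0 L1 N1 K1 L2 N2 K2 f1 f2 η

/-! Constants appearing in the estimates. -/

def Hinf (c : Cst) (s0 r0 : ℝ) : ℝ :=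
  c.K1m / (c.mu + c.nu - 1) * (s0 ^ (-(c.mu + c.nu - 1)) - r0 ^ (-(c.mu + c.nu - 1)))

def Hsup (c : Cst) (s0 r0 : ℝ) : ℝ :=
  (c.K1M * s0 ^ (-(c.mu + c.nu - 1)) + c.K2M * r0 ^ (-(c.mu + c.nu - 1))) / (c.mu + c.nu - 1)

def Htil (c : Cst) (s0 r0 : ℝ) : ℝ :=
  (c.Kt1 * s0 ^ (-(c.mu + c.nu - 1)) + c.Kt2 * r0 ^ (-(c.mu + c.nu - 1))) / (c.mu + c.nu - 1)

/-- Limit of `Hinf` as `r0 → ∞`. -/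
def HinfI (c : Cst) (s0 : ℝ) : ℝ := c.K1m / (c.mu + c.nu - 1) * s0 ^ (-(c.mu + c.nu - 1))

/-- Limit of `Hsup` as `r0 → ∞`. -/
def HsupI (c : Cst) (s0 : ℝ) : ℝ := c.K1M * s0 ^ (-(c.mu + c.nu - 1)) / (c.mu + c.nu - 1)

/-- Limit of `Htil` as `r0 → ∞`. -/
def HtilI (c : Cst) (s0 : ℝ) : ℝ := c.Kt1 * s0 ^ (-(c.mu + c.nu - 1)) / (c.mu + c.nu - 1)

/-- `E1inf` as a function of the value `h` of `Hinf`. -/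
def E1infG (c : Cst) (s0 h : ℝ) : ℝ :=
  Real.exp (-(c.a * c.N1M / (c.L1m * (c.mu - 1) * s0 ^ (2 * c.mu - 2))
    + c.D1 * c.K1M / (h * c.L1m * (2 * c.mu + c.nu - 1) * s0 ^ (2 * c.mu + c.nu - 1))))

/-- `Ẽ1` as a function of the values `h` of `Hinf` and `ht` of `Htil`. -/
def E1tilG (c : Cst) (s0 h ht : ℝ) : ℝ :=
  2 * c.a * (c.Nt1 / (c.L1m * (c.mu - 2) * s0 ^ (c.mu - 2))
      + c.N1M * c.Lt1 / (c.L1m ^ 2 * (3 * c.mu - 2) * s0 ^ (3 * c.mu - 2)))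
    + c.D1 * (c.Kt1 / (h * c.L1m * (2 * c.mu + c.nu - 1) * s0 ^ (2 * c.mu + c.nu - 1))
      + c.K1M / (h * c.L1m)
        * (ht / (h * (2 * c.mu + c.nu - 1) * s0 ^ (2 * c.mu + c.nu - 1))
          + c.Lt1 / (c.L1m * (3 * c.mu + c.nu - 1) * s0 ^ (3 * c.mu + c.nu - 1))))

def Phi1tilG (c : Cst) (s0 h ht : ℝ) : ℝ :=
  E1tilG c s0 h ht / (c.L1m * (c.mu + c.nu - 1) * s0 ^ (c.mu + c.nu - 1))
    + c.Lt1 / (c.L1m ^ 2 * (2 * c.mu + c.nu - 1) * s0 ^ (2 * c.mu + c.nu - 1))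

def H1supG (c : Cst) (s0 h : ℝ) : ℝ :=
  c.K1M / (E1infG c s0 h * (c.mu + c.nu - 1) * s0 ^ (c.mu + c.nu - 1))

def H1tilG (c : Cst) (s0 h ht : ℝ) : ℝ :=
  (c.Kt1 + c.K1M * E1tilG c s0 h ht / E1infG c s0 h)
    / (E1infG c s0 h * (c.mu + c.nu - 1) * s0 ^ (c.mu + c.nu - 1))

def G1supG (c : Cst) (s0 h : ℝ) : ℝ :=
  H1supG c s0 h / (c.L1m * (c.mu + c.nu - 1) * s0 ^ (c.mu + c.nu - 1))

def G1tilG (c : Cst) (s0 h ht : ℝ) : ℝ :=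
  H1supG c s0 h * Phi1tilG c s0 h ht
    + H1tilG c s0 h ht / (c.L1m * (c.mu + c.nu - 1) * s0 ^ (c.mu + c.nu - 1))

/-- `ε1` as a function of the values `h` of `Hinf`, `hs` of `Hsup`, `ht` of `Htil`. -/
def eps1G (c : Cst) (s0 h hs ht : ℝ) : ℝ :=
  2 * s0 ^ c.nu * c.Q * Real.exp (-s0 ^ 2) * Phi1tilG c s0 h ht
    + 2 * c.D1s * (2 * G1supG c s0 h * hs * ht / h ^ 4 + G1tilG c s0 h ht / h ^ 2)

def E1inf (c : Cst) (s0 r0 : ℝ) : ℝ := E1infG c s0 (Hinf c s0 r0)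
def E1til (c : Cst) (s0 r0 : ℝ) : ℝ := E1tilG c s0 (Hinf c s0 r0) (Htil c s0 r0)
def Phi1til (c : Cst) (s0 r0 : ℝ) : ℝ := Phi1tilG c s0 (Hinf c s0 r0) (Htil c s0 r0)
def H1sup (c : Cst) (s0 r0 : ℝ) : ℝ := H1supG c s0 (Hinf c s0 r0)
def H1til (c : Cst) (s0 r0 : ℝ) : ℝ := H1tilG c s0 (Hinf c s0 r0) (Htil c s0 r0)
def G1sup (c : Cst) (s0 r0 : ℝ) : ℝ := G1supG c s0 (Hinf c s0 r0)
def G1til (c : Cst) (s0 r0 : ℝ) : ℝ := G1tilG c s0 (Hinf c s0 r0) (Htil c s0 r0)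
def eps1 (c : Cst) (s0 r0 : ℝ) : ℝ := eps1G c s0 (Hinf c s0 r0) (Hsup c s0 r0) (Htil c s0 r0)

/-- `j1(s0) = lim_{r0→∞} ε1(r0,s0)`: the same expression with `Hinf, Hsup, Htil`
replaced by their limits as `r0 → ∞`. -/
def j1 (c : Cst) (s0 : ℝ) : ℝ := eps1G c s0 (HinfI c s0) (HsupI c s0) (HtilI c s0)

def E2inf (c : Cst) (s0 r0 : ℝ) : ℝ :=
  Real.exp (-(c.a * c.N2M / (c.L2m * (c.mu - 1) * r0 ^ (2 * c.mu - 2))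
    + c.D2 * c.K2M / (Hinf c s0 r0 * c.L2m * (2 * c.mu + c.nu - 1) * r0 ^ (2 * c.mu + c.nu - 1))))

def E2til (c : Cst) (s0 r0 : ℝ) : ℝ :=
  2 * c.a * (c.Nt2 / (c.L2m * (c.mu - 2) * r0 ^ (c.mu - 2))
      + c.N2M * c.Lt2 / (c.L2m ^ 2 * (3 * c.mu - 2) * r0 ^ (3 * c.mu - 2)))
    + c.D2 * (c.Kt2 / (Hinf c s0 r0 * c.L2m * (2 * c.mu + c.nu - 1) * r0 ^ (2 * c.mu + c.nu - 1))
      + c.K2M / (Hinf c s0 r0 * c.L2m)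
        * (Htil c s0 r0 / (Hinf c s0 r0 * (2 * c.mu + c.nu - 1) * r0 ^ (2 * c.mu + c.nu - 1))
          + c.Lt2 / (c.L2m * (3 * c.mu + c.nu - 1) * r0 ^ (3 * c.mu + c.nu - 1))))

def Phi2til (c : Cst) (s0 r0 : ℝ) : ℝ :=
  E2til c s0 r0 / (c.L2m * (c.mu + c.nu - 1) * r0 ^ (c.mu + c.nu - 1))
    + c.Lt2 / (c.L2m ^ 2 * (2 * c.mu + c.nu - 1) * r0 ^ (2 * c.mu + c.nu - 1))

/-- `Φ2inf(∞)(r0,s0)`. -/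
def Phi2infC (c : Cst) (s0 r0 : ℝ) : ℝ :=
  E2inf c s0 r0 / (c.L2M * (c.mu + c.nu - 1) * r0 ^ (c.mu + c.nu - 1))

/-- `Φ2sup(r0)`. -/
def Phi2supC (c : Cst) (r0 : ℝ) : ℝ := 1 / (c.L2m * (c.mu + c.nu - 1) * r0 ^ (c.mu + c.nu - 1))

def H2sup (c : Cst) (s0 r0 : ℝ) : ℝ :=
  c.K2M / (E2inf c s0 r0 * (c.mu + c.nu - 1) * r0 ^ (c.mu + c.nu - 1))

def H2til (c : Cst) (s0 r0 : ℝ) : ℝ :=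
  (c.Kt2 + c.K2M * E2til c s0 r0 / E2inf c s0 r0)
    / (E2inf c s0 r0 * (c.mu + c.nu - 1) * r0 ^ (c.mu + c.nu - 1))

def G2sup (c : Cst) (s0 r0 : ℝ) : ℝ :=
  H2sup c s0 r0 / (c.L2m * (c.mu + c.nu - 1) * r0 ^ (c.mu + c.nu - 1))

def G2til (c : Cst) (s0 r0 : ℝ) : ℝ :=
  H2sup c s0 r0 * Phi2til c s0 r0
    + H2til c s0 r0 / (c.L2m * (c.mu + c.nu - 1) * r0 ^ (c.mu + c.nu - 1))

def eps21 (c : Cst) (s0 r0 : ℝ) : ℝ := 2 * Phi2til c s0 r0 / Phi2infC c s0 r0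

def eps22 (c : Cst) (s0 r0 : ℝ) : ℝ :=
  G2til c s0 r0 / Hinf c s0 r0 ^ 2
    + 2 * G2sup c s0 r0 * Hsup c s0 r0 * Htil c s0 r0 / Hinf c s0 r0 ^ 4

def eps23 (c : Cst) (s0 r0 : ℝ) : ℝ :=
  Phi2supC c r0 / Phi2infC c s0 r0 * eps22 c s0 r0
    + G2sup c s0 r0 / Hinf c s0 r0 ^ 2 * eps21 c s0 r0

def eps2 (c : Cst) (s0 r0 : ℝ) : ℝ := eps21 c s0 r0 + eps22 c s0 r0 + eps23 c s0 r0

/-!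
Each of `H`, `E1`, `H1`, `G1` is built from `L(f1)`, `N(f1)`, `K(f1)` and the previous ones by
products, quotients, `exp (-·)` and integration. By (A1)–(A4) every factor has an upper bound
`C v^(-p)`, the denominators `L(f1)`, `H`, `E1` have positive lower bounds `L1m v^μ`, `H_inf`,
`E1inf`, and every factor is Lipschitz in `(f1, f2)`. Writing
`x y - x' y' = (x - x') y + x' (y - y')` and `1/y - 1/y' = (y' - y)/(y y')`, and using that
`exp (-·)` is 1-Lipschitz on `[0, ∞)`, the difference of two integrands is bounded by a sum of
terms `C ‖(f1,f2) - (g1,g2)‖ v^(-p)` with `p > 1`; integrating with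
`∫_{s0}^{η} v^(-p) dv ≤ 1/((p - 1) s0^(p-1))` gives the Lipschitz constants `H̃`, `Ẽ1`, `H̃1`
and finally `G̃1`.
-/

open Set

theorem integral_rpow_neg_of_one_lt {a b p : ℝ} (ha : 0 < a) (hab : a ≤ b) (hp : 1 < p) :
    ∫ x in a..b, x ^ (-p) = (a ^ (-(p - 1)) - b ^ (-(p - 1))) / (p - 1) := by
  have h0 : (0 : ℝ) ∉ uIcc a b := by
    rw [uIcc_of_le hab]; exact fun h => ha.not_ge h.1
  rw [integral_rpow (Or.inr ⟨by linarith, h0⟩), show -p + 1 = -(p - 1) by ring]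
  field_simp [show p - 1 ≠ 0 by linarith]
  ring

theorem integral_rpow_neg_le {a b p : ℝ} (ha : 0 < a) (hab : a ≤ b) (hp : 1 < p) :
    ∫ x in a..b, x ^ (-p) ≤ 1 / ((p - 1) * a ^ (p - 1)) := by
  rw [integral_rpow_neg_of_one_lt ha hab hp, Real.rpow_neg ha.le, one_div, mul_inv,
    inv_mul_eq_div, div_le_div_iff_of_pos_right (by linarith)]
  linarith [Real.rpow_nonneg (ha.trans_le hab).le (-(p - 1))]

theorem intervalIntegrable_const_mul_rpow {a b : ℝ} (ha : 0 < a) (hab : a ≤ b) (C p : ℝ) :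
    IntervalIntegrable (fun x => C * x ^ p) volume a b := by
  refine (continuousOn_const.mul (continuousOn_id.rpow_const fun x hx => ?_)).intervalIntegrable
  rw [uIcc_of_le hab] at hx
  exact Or.inl (ha.trans_le hx.1).ne'

theorem abs_integral_le_sum_rpow {n : ℕ} {f : ℝ → ℝ} {a b : ℝ} {C p : Fin n → ℝ}
    (ha : 0 < a) (hab : a ≤ b) (hp : ∀ i, 1 < p i) (hC : ∀ i, 0 ≤ C i)
    (hf : ∀ x ∈ Icc a b, |f x| ≤ ∑ i, C i * x ^ (-p i)) :
    |∫ x in a..b, f x| ≤ ∑ i, C i / ((p i - 1) * a ^ (p i - 1)) := by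
  have hint : ∀ i, IntervalIntegrable (fun x => C i * x ^ (-p i)) volume a b :=
    fun i => intervalIntegrable_const_mul_rpow ha hab _ _
  calc |∫ x in a..b, f x| ≤ ∫ x in a..b, ∑ i, C i * x ^ (-p i) :=
        intervalIntegral.norm_integral_le_of_norm_le (f := f) (g := fun x => ∑ i, C i * x ^ (-p i))
          hab (Filter.Eventually.of_forall fun x hx => hf x (Ioc_subset_Icc_self hx))
          (by simpa only [Finset.sum_fn] using IntervalIntegrable.sum Finset.univ fun i _ => hint i)
    _ = ∑ i, C i * ∫ x in a..b, x ^ (-p i) := by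
        rw [intervalIntegral.integral_finsetSum fun i _ => hint i]
        simp only [intervalIntegral.integral_const_mul]
    _ ≤ ∑ i, C i / ((p i - 1) * a ^ (p i - 1)) := by
        gcongr with i
        rw [div_eq_mul_one_div]
        exact mul_le_mul_of_nonneg_left (integral_rpow_neg_le ha hab (hp i)) (hC i)

theorem abs_integral_le_rpow {f : ℝ → ℝ} {a b C p : ℝ} (ha : 0 < a) (hab : a ≤ b) (hp : 1 < p)
    (hC : 0 ≤ C) (hf : ∀ x ∈ Icc a b, |f x| ≤ C * x ^ (-p)) :
    |∫ x in a..b, f x| ≤ C / ((p - 1) * a ^ (p - 1)) := by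
  simpa using abs_integral_le_sum_rpow (C := ![C]) (p := ![p]) ha hab (by simpa) (by simpa)
    (by simpa using hf)

theorem abs_integral_le_rpow_add_rpow {f : ℝ → ℝ} {a b C D p q : ℝ} (ha : 0 < a) (hab : a ≤ b)
    (hp : 1 < p) (hq : 1 < q) (hC : 0 ≤ C) (hD : 0 ≤ D)
    (hf : ∀ x ∈ Icc a b, |f x| ≤ C * x ^ (-p) + D * x ^ (-q)) :
    |∫ x in a..b, f x| ≤ C / ((p - 1) * a ^ (p - 1)) + D / ((q - 1) * a ^ (q - 1)) := by
  simpa using abs_integral_le_sum_rpow (C := ![C, D]) (p := ![p, q]) ha hab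
    (Fin.forall_fin_two.2 ⟨hp, hq⟩) (Fin.forall_fin_two.2 ⟨hC, hD⟩) (by simpa using hf)

theorem integrableOn_Ioi_of_abs_le_rpow {f : ℝ → ℝ} {r C p : ℝ} (hr : 0 < r) (hp : 1 < p)
    (hf : ContinuousOn f (Ici r)) (hbound : ∀ x ∈ Ioi r, |f x| ≤ C * x ^ (-p)) :
    IntegrableOn f (Ioi r) :=
  Integrable.mono' ((integrableOn_Ioi_rpow_of_lt (neg_lt_neg hp) hr).const_mul C)
    ((hf.mono Ioi_subset_Ici_self).aestronglyMeasurable measurableSet_Ioi)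
    ((ae_restrict_iff' measurableSet_Ioi).2 (Filter.Eventually.of_forall hbound))

theorem abs_integral_Ioi_le_rpow {f : ℝ → ℝ} {r C p : ℝ} (hr : 0 < r) (hp : 1 < p)
    (hbound : ∀ x ∈ Ioi r, |f x| ≤ C * x ^ (-p)) :
    |∫ x in Ioi r, f x| ≤ C / ((p - 1) * r ^ (p - 1)) := by
  calc |∫ x in Ioi r, f x| ≤ ∫ x in Ioi r, C * x ^ (-p) :=
        norm_integral_le_of_norm_le (f := f)
          ((integrableOn_Ioi_rpow_of_lt (neg_lt_neg hp) hr).const_mul C)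
          ((ae_restrict_iff' measurableSet_Ioi).2 (Filter.Eventually.of_forall hbound))
    _ = C / ((p - 1) * r ^ (p - 1)) := by
        rw [integral_const_mul, integral_Ioi_rpow_of_lt (neg_lt_neg hp) hr,
          show -p + 1 = -(p - 1) by ring, Real.rpow_neg hr.le]
        field_simp [show p - 1 ≠ 0 by linarith]

theorem abs_exp_neg_sub_exp_neg_le {x y : ℝ} (hx : 0 ≤ x) (hy : 0 ≤ y) :
    |Real.exp (-x) - Real.exp (-y)| ≤ |x - y| := by
  wlog hxy : x ≤ y generalizing x y
  · rw [abs_sub_comm, abs_sub_comm x]; exact this hy hx (le_of_not_ge hxy)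
  have hexp : Real.exp (-y) = Real.exp (-x) * Real.exp (-(y - x)) := by
    rw [← Real.exp_add]; ring_nf
  have h1 : Real.exp (-(y - x)) ≤ 1 := Real.exp_le_one_iff.2 (by linarith)
  have h2 : Real.exp (-x) ≤ 1 := Real.exp_le_one_iff.2 (by linarith)
  have h3 := Real.one_sub_le_exp_neg (y - x)
  have h4 := Real.exp_pos (-x)
  rw [abs_of_nonneg (by rw [hexp]; nlinarith), abs_of_nonpos (by linarith), hexp]
  nlinarith

theorem abs_mul_sub_mul_le {x y x' y' X Y δ ε : ℝ} (hy : |y| ≤ Y) (hx' : |x'| ≤ X)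
    (hδ : |x - x'| ≤ δ) (hε : |y - y'| ≤ ε) : |x * y - x' * y'| ≤ δ * Y + X * ε := by
  calc |x * y - x' * y'| = |(x - x') * y + x' * (y - y')| := by ring_nf
    _ ≤ |x - x'| * |y| + |x'| * |y - y'| := by
        rw [← abs_mul, ← abs_mul]; exact abs_add_le _ _
    _ ≤ δ * Y + X * ε := by
        gcongr <;> linarith [abs_nonneg (x - x'), abs_nonneg y', abs_nonneg x', abs_nonneg y]

theorem abs_inv_sub_inv_le {y y' m ε : ℝ} (hm : 0 < m) (hy : m ≤ y) (hy' : m ≤ y')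
    (hε : |y - y'| ≤ ε) : |y⁻¹ - y'⁻¹| ≤ ε / m ^ 2 := by
  have hy0 : 0 < y := hm.trans_le hy
  have hy0' : 0 < y' := hm.trans_le hy'
  rw [inv_sub_inv hy0.ne' hy0'.ne', abs_div, abs_sub_comm, abs_of_pos (mul_pos hy0 hy0'), sq]
  exact div_le_div₀ ((abs_nonneg _).trans hε) hε (mul_pos hm hm) (mul_le_mul hy hy' hm.le hy0.le)

theorem abs_inv_le_inv_of_le {y m : ℝ} (hm : 0 < m) (hy : m ≤ y) : |y⁻¹| ≤ m⁻¹ := by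
  rw [abs_of_pos (inv_pos.2 (hm.trans_le hy))]
  exact inv_anti₀ hm hy

theorem continuousOn_div_rpow {F : ℝ → ℝ} {s : Set ℝ} (p : ℝ) (hs : s ⊆ Ioi 0)
    (hF : ContinuousOn F s) : ContinuousOn (fun v => F v / v ^ p) s :=
  hF.div (continuousOn_id.rpow_const fun _ hx => Or.inl (hs hx).ne')
    fun _ hx => (Real.rpow_pos_of_pos (hs hx) p).ne'

theorem mul_rpow_neg_add {v : ℝ} (hv : 0 < v) (C μ ν : ℝ) :
    C * v ^ (-(μ + ν)) = C * v ^ (-μ) / v ^ ν := by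
  rw [neg_add, Real.rpow_add hv, Real.rpow_neg hv.le ν]; ring

theorem abs_div_rpow_le {x v C μ : ℝ} (ν : ℝ) (hv : 0 < v) (h : |x| ≤ C * v ^ (-μ)) :
    |x / v ^ ν| ≤ C * v ^ (-(μ + ν)) := by
  rw [mul_rpow_neg_add hv, abs_div, abs_of_pos (Real.rpow_pos_of_pos hv _)]
  gcongr

theorem supOn_nonneg (S : Set ℝ) (f : ℝ → ℝ) : 0 ≤ supOn S f :=
  Real.iSup_nonneg fun _ => abs_nonneg _

theorem pairNorm_nonneg (s0 r0 : ℝ) (f1 f2 g1 g2 : ℝ → ℝ) : 0 ≤ pairNorm s0 r0 f1 f2 g1 g2 :=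
  (supOn_nonneg _ _).trans (le_max_left _ _)

/-- `(f1, f2) ∈ 𝒦`, together with the standing hypotheses on the constants and on `L, N, K`. -/
structure Admissible (c : Cst) (s0 r0 : ℝ) (L1 N1 K1 L2 N2 K2 : (ℝ → ℝ) → ℝ → ℝ)
    (f1 f2 : ℝ → ℝ) : Prop where
  pos : PosC c s0 r0
  assum : Assum c s0 r0 L1 N1 K1 L2 N2 K2
  mem1 : f1 ∈ C1 s0 r0
  mem2 : f2 ∈ Mset r0

def E1Integrand (c : Cst) (s0 r0 : ℝ) (L1 N1 K1 L2 N2 K2 : (ℝ → ℝ) → ℝ → ℝ) (f1 f2 : ℝ → ℝ)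
    (v : ℝ) : ℝ :=
  2 * c.a * v * (N1 f1 v / L1 f1 v)
    + c.D1 / Hf c s0 r0 L1 N1 K1 L2 N2 K2 f1 f2 * (K1 f1 v / (L1 f1 v * v ^ c.nu))

def H1Integrand (c : Cst) (s0 r0 : ℝ) (L1 N1 K1 L2 N2 K2 : (ℝ → ℝ) → ℝ → ℝ) (f1 f2 : ℝ → ℝ)
    (v : ℝ) : ℝ :=
  K1 f1 v / (v ^ c.nu * E1f c s0 r0 L1 N1 K1 L2 N2 K2 f1 f2 v)

def G1Integrand (c : Cst) (s0 r0 : ℝ) (L1 N1 K1 L2 N2 K2 : (ℝ → ℝ) → ℝ → ℝ) (f1 f2 : ℝ → ℝ)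
    (v : ℝ) : ℝ :=
  E1f c s0 r0 L1 N1 K1 L2 N2 K2 f1 f2 v * H1f c s0 r0 L1 N1 K1 L2 N2 K2 f1 f2 v
    / (L1 f1 v * v ^ c.nu)

section Estimates

variable {c : Cst} {s0 r0 : ℝ} {L1 N1 K1 L2 N2 K2 : (ℝ → ℝ) → ℝ → ℝ} {f1 f2 g1 g2 : ℝ → ℝ}
  {v η : ℝ}

theorem E1f_eq_exp (η : ℝ) : E1f c s0 r0 L1 N1 K1 L2 N2 K2 f1 f2 η
    = Real.exp (-∫ v in s0..η, E1Integrand c s0 r0 L1 N1 K1 L2 N2 K2 f1 f2 v) := rfl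

theorem E1f_pos (η : ℝ) : 0 < E1f c s0 r0 L1 N1 K1 L2 N2 K2 f1 f2 η := Real.exp_pos _

theorem H1f_eq_integral (η : ℝ) : H1f c s0 r0 L1 N1 K1 L2 N2 K2 f1 f2 η
    = ∫ v in s0..η, H1Integrand c s0 r0 L1 N1 K1 L2 N2 K2 f1 f2 v := rfl

theorem G1f_eq_integral (η : ℝ) : G1f c s0 r0 L1 N1 K1 L2 N2 K2 f1 f2 η
    = ∫ v in s0..η, G1Integrand c s0 r0 L1 N1 K1 L2 N2 K2 f1 f2 v := rfl

theorem H1Integrand_eq_div (v : ℝ) : H1Integrand c s0 r0 L1 N1 K1 L2 N2 K2 f1 f2 v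
    = K1 f1 v * (E1f c s0 r0 L1 N1 K1 L2 N2 K2 f1 f2 v)⁻¹ / v ^ c.nu := by
  rw [H1Integrand, mul_comm (v ^ c.nu), ← div_div, div_eq_mul_inv (K1 f1 v)]

theorem G1Integrand_eq_div (v : ℝ) : G1Integrand c s0 r0 L1 N1 K1 L2 N2 K2 f1 f2 v
    = H1f c s0 r0 L1 N1 K1 L2 N2 K2 f1 f2 v
      * (E1f c s0 r0 L1 N1 K1 L2 N2 K2 f1 f2 v * (L1 f1 v)⁻¹) / v ^ c.nu := by
  rw [G1Integrand, ← div_div, div_eq_mul_inv _ (L1 f1 v), mul_comm (E1f _ _ _ _ _ _ _ _ _ _ _ v),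
    mul_assoc]

theorem H1til_eq : H1til c s0 r0 = (c.Kt1 + c.K1M * E1til c s0 r0 / E1inf c s0 r0)
    / (E1inf c s0 r0 * (c.mu + c.nu - 1) * s0 ^ (c.mu + c.nu - 1)) := rfl

theorem G1til_eq : G1til c s0 r0
    = H1sup c s0 r0 * (E1til c s0 r0 / (c.L1m * (c.mu + c.nu - 1) * s0 ^ (c.mu + c.nu - 1))
        + c.Lt1 / (c.L1m ^ 2 * (2 * c.mu + c.nu - 1) * s0 ^ (2 * c.mu + c.nu - 1)))
      + H1til c s0 r0 / (c.L1m * (c.mu + c.nu - 1) * s0 ^ (c.mu + c.nu - 1)) := rfl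

namespace PosC

theorem Icc_subset_Ioi (h : PosC c s0 r0) : Icc s0 r0 ⊆ Ioi 0 := by
  obtain ⟨-, -, -, -, hs0, -⟩ := h
  exact fun _ hv => hs0.trans_le hv.1

theorem Hinf_pos (h : PosC c s0 r0) : 0 < Hinf c s0 r0 := by
  obtain ⟨-, hν, -, hμ, hs0, hsr, -, -, -, -, -, -, -, -, -, hK1m, -⟩ := h
  have : r0 ^ (-(c.mu + c.nu - 1)) < s0 ^ (-(c.mu + c.nu - 1)) :=
    Real.rpow_lt_rpow_of_neg hs0 hsr (by linarith)
  exact mul_pos (div_pos hK1m (by linarith)) (by linarith)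

theorem Htil_nonneg (h : PosC c s0 r0) : 0 ≤ Htil c s0 r0 := by
  obtain ⟨-, hν, -, hμ, hs0, hsr, -, -, -, -, -, -, -, -, -, -, -, -, -, -, -, -, -, -, -,
    hKt1, -, -, hKt2⟩ := h
  have : 0 < c.mu + c.nu - 1 := by linarith
  have := Real.rpow_pos_of_pos hs0 (-(c.mu + c.nu - 1))
  have := Real.rpow_pos_of_pos (hs0.trans hsr) (-(c.mu + c.nu - 1))
  unfold Htil
  positivity

theorem E1til_nonneg (h : PosC c s0 r0) : 0 ≤ E1til c s0 r0 := by
  have := h.Hinf_pos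
  have := h.Htil_nonneg
  obtain ⟨ha, hν, -, hμ, hs0, -, hD1, -, -, -, -, hL1m, -, -, hN1M, -, hK1M, -, -, -, -, -, -,
    hLt1, hNt1, hKt1, -⟩ := h
  have : 0 < c.mu - 2 := by linarith
  have : 0 < 3 * c.mu - 2 := by linarith
  have : 0 < 2 * c.mu + c.nu - 1 := by linarith
  have : 0 < 3 * c.mu + c.nu - 1 := by linarith
  rw [E1til, E1tilG]
  positivity

theorem H1til_nonneg (h : PosC c s0 r0) : 0 ≤ H1til c s0 r0 := by
  have := h.E1til_nonneg
  have : 0 < E1inf c s0 r0 := Real.exp_pos _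
  obtain ⟨-, hν, -, hμ, hs0, -, -, -, -, -, -, -, -, -, -, -, hK1M, -, -, -, -, -, -, -, -,
    hKt1, -⟩ := h
  have : 0 < c.mu + c.nu - 1 := by linarith
  rw [H1til_eq]
  positivity

end PosC

namespace Admissible

theorem bounds (hf : Admissible c s0 r0 L1 N1 K1 L2 N2 K2 f1 f2) (hv : v ∈ Icc s0 r0) :
    c.L1m * v ^ c.mu ≤ L1 f1 v ∧ L1 f1 v ≤ c.L1M * v ^ c.mu ∧
    c.N1m * v ^ (-c.mu) ≤ N1 f1 v ∧ N1 f1 v ≤ c.N1M * v ^ (-c.mu) ∧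
    c.K1m * v ^ (-c.mu) ≤ K1 f1 v ∧ K1 f1 v ≤ c.K1M * v ^ (-c.mu) :=
  hf.assum.2.2.1 f1 hf.mem1 v hv

theorem lip (hf : Admissible c s0 r0 L1 N1 K1 L2 N2 K2 f1 f2)
    (hg : Admissible c s0 r0 L1 N1 K1 L2 N2 K2 g1 g2) (hv : v ∈ Icc s0 r0) :
    |L1 f1 v - L1 g1 v| ≤ c.Lt1 * pairNorm s0 r0 f1 f2 g1 g2 ∧
    |N1 f1 v - N1 g1 v| ≤ c.Nt1 * pairNorm s0 r0 f1 f2 g1 g2 ∧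
    |K1 f1 v - K1 g1 v| ≤ c.Kt1 * v ^ (-c.mu) * pairNorm s0 r0 f1 f2 g1 g2 := by
  have hv0 : 0 ≤ v ^ (-c.mu) := Real.rpow_nonneg (hf.pos.Icc_subset_Ioi hv).le _
  obtain ⟨-, -, -, -, -, -, -, -, -, -, -, -, -, -, -, -, -, -, -, -, -, -, -, hLt1, hNt1,
    hKt1, -⟩ := hf.pos
  have hP : supOn (Icc s0 r0) (f1 - g1) ≤ pairNorm s0 r0 f1 f2 g1 g2 := le_max_left _ _
  obtain ⟨hL, hN, hK⟩ := hf.assum.2.2.2.2.1 f1 hf.mem1 g1 hg.mem1 v hv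
  exact ⟨hL.trans (by gcongr), hN.trans (by gcongr), hK.trans (by gcongr)⟩

theorem L1m_mul_rpow_pos (hf : Admissible c s0 r0 L1 N1 K1 L2 N2 K2 f1 f2)
    (hv : v ∈ Icc s0 r0) : 0 < c.L1m * v ^ c.mu := by
  have := Real.rpow_pos_of_pos (hf.pos.Icc_subset_Ioi hv) c.mu
  obtain ⟨-, -, -, -, -, -, -, -, -, -, -, hL1m, -⟩ := hf.pos
  exact mul_pos hL1m this

theorem L_pos (hf : Admissible c s0 r0 L1 N1 K1 L2 N2 K2 f1 f2) (hv : v ∈ Icc s0 r0) :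
    0 < L1 f1 v :=
  (hf.L1m_mul_rpow_pos hv).trans_le (hf.bounds hv).1

theorem N_pos (hf : Admissible c s0 r0 L1 N1 K1 L2 N2 K2 f1 f2) (hv : v ∈ Icc s0 r0) :
    0 < N1 f1 v := by
  have := Real.rpow_pos_of_pos (hf.pos.Icc_subset_Ioi hv) (-c.mu)
  obtain ⟨-, -, -, -, -, -, -, -, -, -, -, -, -, hN1m, -⟩ := hf.pos
  exact (mul_pos hN1m this).trans_le (hf.bounds hv).2.2.1

theorem K_pos (hf : Admissible c s0 r0 L1 N1 K1 L2 N2 K2 f1 f2) (hv : v ∈ Icc s0 r0) :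
    0 < K1 f1 v := by
  have := Real.rpow_pos_of_pos (hf.pos.Icc_subset_Ioi hv) (-c.mu)
  obtain ⟨-, -, -, -, -, -, -, -, -, -, -, -, -, -, -, hK1m, -⟩ := hf.pos
  exact (mul_pos hK1m this).trans_le (hf.bounds hv).2.2.2.2.1

theorem abs_N_le (hf : Admissible c s0 r0 L1 N1 K1 L2 N2 K2 f1 f2) (hv : v ∈ Icc s0 r0) :
    |N1 f1 v| ≤ c.N1M * v ^ (-c.mu) := by
  rw [abs_of_pos (hf.N_pos hv)]; exact (hf.bounds hv).2.2.2.1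

theorem abs_K_le (hf : Admissible c s0 r0 L1 N1 K1 L2 N2 K2 f1 f2) (hv : v ∈ Icc s0 r0) :
    |K1 f1 v| ≤ c.K1M * v ^ (-c.mu) := by
  rw [abs_of_pos (hf.K_pos hv)]; exact (hf.bounds hv).2.2.2.2.2

theorem abs_inv_L_le (hf : Admissible c s0 r0 L1 N1 K1 L2 N2 K2 f1 f2) (hv : v ∈ Icc s0 r0) :
    |(L1 f1 v)⁻¹| ≤ (c.L1m * v ^ c.mu)⁻¹ :=
  abs_inv_le_inv_of_le (hf.L1m_mul_rpow_pos hv) (hf.bounds hv).1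

theorem abs_inv_L_sub_le (hf : Admissible c s0 r0 L1 N1 K1 L2 N2 K2 f1 f2)
    (hg : Admissible c s0 r0 L1 N1 K1 L2 N2 K2 g1 g2) (hv : v ∈ Icc s0 r0) :
    |(L1 f1 v)⁻¹ - (L1 g1 v)⁻¹| ≤ c.Lt1 * pairNorm s0 r0 f1 f2 g1 g2 / (c.L1m * v ^ c.mu) ^ 2 :=
  abs_inv_sub_inv_le (hf.L1m_mul_rpow_pos hv) (hf.bounds hv).1 (hg.bounds hv).1 (hf.lip hg hv).1

theorem intervalIntegrable_K1_div_rpow (hf : Admissible c s0 r0 L1 N1 K1 L2 N2 K2 f1 f2) :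
    IntervalIntegrable (fun v => K1 f1 v / v ^ c.nu) volume s0 r0 := by
  obtain ⟨-, -, -, -, -, hsr, -⟩ := hf.pos
  exact (continuousOn_div_rpow _ hf.pos.Icc_subset_Ioi
    (hf.assum.1 f1 hf.mem1).2.2).intervalIntegrable_of_Icc hsr.le

theorem K2_nonneg (hf : Admissible c s0 r0 L1 N1 K1 L2 N2 K2 f1 f2) (hv : v ∈ Ici r0) :
    0 ≤ K2 f2 v := by
  obtain ⟨-, -, -, -, hs0, hsr, -, -, -, -, -, -, -, -, -, -, -, -, -, -, -, hK2m, -⟩ := hf.pos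
  have hv0 : 0 ≤ v := by linarith [mem_Ici.1 hv]
  exact (mul_nonneg hK2m.le (Real.rpow_nonneg hv0 _)).trans
    (hf.assum.2.2.2.1 f2 hf.mem2 v hv).2.2.2.2.1

theorem integrableOn_K2_div_rpow (hf : Admissible c s0 r0 L1 N1 K1 L2 N2 K2 f1 f2) :
    IntegrableOn (fun v => K2 f2 v / v ^ c.nu) (Ioi r0) := by
  obtain ⟨-, hν, -, hμ, hs0, hsr, -⟩ := hf.pos
  have hr0 : 0 < r0 := hs0.trans hsr
  refine integrableOn_Ioi_of_abs_le_rpow (C := c.K2M) hr0 (by linarith : 1 < c.mu + c.nu)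
    (continuousOn_div_rpow _ (fun x hx => hr0.trans_le hx) (hf.assum.2.1 f2 hf.mem2).2.2)
    fun v hv => abs_div_rpow_le _ (hr0.trans hv) ?_
  rw [abs_of_nonneg (hf.K2_nonneg (Ioi_subset_Ici_self hv))]
  exact (hf.assum.2.2.2.1 f2 hf.mem2 v (Ioi_subset_Ici_self hv)).2.2.2.2.2

theorem Hinf_le_Hf (hf : Admissible c s0 r0 L1 N1 K1 L2 N2 K2 f1 f2) :
    Hinf c s0 r0 ≤ Hf c s0 r0 L1 N1 K1 L2 N2 K2 f1 f2 := by
  obtain ⟨-, hν, -, hμ, hs0, hsr, -⟩ := hf.pos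
  have hHinf : Hinf c s0 r0 = ∫ v in s0..r0, c.K1m * v ^ (-(c.mu + c.nu)) := by
    rw [intervalIntegral.integral_const_mul,
      integral_rpow_neg_of_one_lt hs0 hsr.le (by linarith), Hinf]
    ring
  have hIcc : ∫ v in s0..r0, c.K1m * v ^ (-(c.mu + c.nu)) ≤ ∫ v in s0..r0, K1 f1 v / v ^ c.nu :=
    intervalIntegral.integral_mono_on hsr.le (intervalIntegrable_const_mul_rpow hs0 hsr.le _ _)
      hf.intervalIntegrable_K1_div_rpow fun v hv => by
        have : 0 < v := hf.pos.Icc_subset_Ioi hv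
        rw [mul_rpow_neg_add this]
        gcongr
        exact (hf.bounds hv).2.2.2.2.1
  have hIoi : 0 ≤ ∫ v in Ioi r0, K2 f2 v / v ^ c.nu :=
    setIntegral_nonneg measurableSet_Ioi fun v hv =>
      div_nonneg (hf.K2_nonneg (Ioi_subset_Ici_self hv))
        (Real.rpow_nonneg (hs0.trans (hsr.trans hv)).le _)
  unfold Hf
  linarith

theorem Hf_pos (hf : Admissible c s0 r0 L1 N1 K1 L2 N2 K2 f1 f2) :
    0 < Hf c s0 r0 L1 N1 K1 L2 N2 K2 f1 f2 :=
  hf.pos.Hinf_pos.trans_le hf.Hinf_le_Hf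

theorem abs_integral_K1_div_rpow_sub_le (hf : Admissible c s0 r0 L1 N1 K1 L2 N2 K2 f1 f2)
    (hg : Admissible c s0 r0 L1 N1 K1 L2 N2 K2 g1 g2) :
    |(∫ v in s0..r0, K1 f1 v / v ^ c.nu) - ∫ v in s0..r0, K1 g1 v / v ^ c.nu|
      ≤ c.Kt1 * pairNorm s0 r0 f1 f2 g1 g2 / ((c.mu + c.nu - 1) * s0 ^ (c.mu + c.nu - 1)) := by
  have := pairNorm_nonneg s0 r0 f1 f2 g1 g2
  obtain ⟨-, hν, -, hμ, hs0, hsr, -, -, -, -, -, -, -, -, -, -, -, -, -, -, -, -, -, -, -,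
    hKt1, -⟩ := hf.pos
  rw [← intervalIntegral.integral_sub hf.intervalIntegrable_K1_div_rpow
    hg.intervalIntegrable_K1_div_rpow]
  refine abs_integral_le_rpow hs0 hsr.le (by linarith) (by positivity) fun v hv => ?_
  rw [← sub_div]
  refine abs_div_rpow_le _ (hf.pos.Icc_subset_Ioi hv) ?_
  rw [mul_right_comm]
  exact (hf.lip hg hv).2.2

theorem abs_integral_K2_div_rpow_sub_le (hf : Admissible c s0 r0 L1 N1 K1 L2 N2 K2 f1 f2)
    (hg : Admissible c s0 r0 L1 N1 K1 L2 N2 K2 g1 g2) :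
    |(∫ v in Ioi r0, K2 f2 v / v ^ c.nu) - ∫ v in Ioi r0, K2 g2 v / v ^ c.nu|
      ≤ c.Kt2 * pairNorm s0 r0 f1 f2 g1 g2 / ((c.mu + c.nu - 1) * r0 ^ (c.mu + c.nu - 1)) := by
  obtain ⟨-, hν, -, hμ, hs0, hsr, -, -, -, -, -, -, -, -, -, -, -, -, -, -, -, -, -, -, -, -,
    -, -, hKt2⟩ := hf.pos
  have hr0 : 0 < r0 := hs0.trans hsr
  have hP : supOn (Ici r0) (f2 - g2) ≤ pairNorm s0 r0 f1 f2 g1 g2 := le_max_right _ _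
  rw [← integral_sub hf.integrableOn_K2_div_rpow hg.integrableOn_K2_div_rpow]
  refine abs_integral_Ioi_le_rpow hr0 (by linarith) fun v hv => ?_
  rw [← sub_div]
  refine abs_div_rpow_le _ (hr0.trans hv) ?_
  rw [mul_right_comm]
  have := Real.rpow_nonneg (hr0.trans hv).le (-c.mu)
  exact (hf.assum.2.2.2.2.2 f2 hf.mem2 g2 hg.mem2 v (Ioi_subset_Ici_self hv)).2.2.trans
    (by gcongr)

theorem abs_Hf_sub_le (hf : Admissible c s0 r0 L1 N1 K1 L2 N2 K2 f1 f2)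
    (hg : Admissible c s0 r0 L1 N1 K1 L2 N2 K2 g1 g2) :
    |Hf c s0 r0 L1 N1 K1 L2 N2 K2 f1 f2 - Hf c s0 r0 L1 N1 K1 L2 N2 K2 g1 g2|
      ≤ Htil c s0 r0 * pairNorm s0 r0 f1 f2 g1 g2 := by
  obtain ⟨-, hν, -, hμ, hs0, hsr, -⟩ := hf.pos
  have : 0 < c.mu + c.nu - 1 := by linarith
  rw [Hf, Hf, add_sub_add_comm]
  refine (abs_add_le _ _).trans ((add_le_add (hf.abs_integral_K1_div_rpow_sub_le hg)
    (hf.abs_integral_K2_div_rpow_sub_le hg)).trans_eq ?_)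
  rw [Htil, Real.rpow_neg hs0.le, Real.rpow_neg (hs0.trans hsr).le]
  field_simp

theorem abs_inv_Hf_sub_le (hf : Admissible c s0 r0 L1 N1 K1 L2 N2 K2 f1 f2)
    (hg : Admissible c s0 r0 L1 N1 K1 L2 N2 K2 g1 g2) :
    |(Hf c s0 r0 L1 N1 K1 L2 N2 K2 f1 f2)⁻¹ - (Hf c s0 r0 L1 N1 K1 L2 N2 K2 g1 g2)⁻¹|
      ≤ Htil c s0 r0 * pairNorm s0 r0 f1 f2 g1 g2 / Hinf c s0 r0 ^ 2 :=
  abs_inv_sub_inv_le hf.pos.Hinf_pos hf.Hinf_le_Hf hg.Hinf_le_Hf (hf.abs_Hf_sub_le hg)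

theorem E1Integrand_nonneg (hf : Admissible c s0 r0 L1 N1 K1 L2 N2 K2 f1 f2)
    (hv : v ∈ Icc s0 r0) : 0 ≤ E1Integrand c s0 r0 L1 N1 K1 L2 N2 K2 f1 f2 v := by
  have : 0 < v := hf.pos.Icc_subset_Ioi hv
  have := hf.L_pos hv
  have := hf.N_pos hv
  have := hf.K_pos hv
  have := hf.Hf_pos
  obtain ⟨ha, -, -, -, -, -, hD1, -⟩ := hf.pos
  unfold E1Integrand
  positivity

theorem E1Integrand_le (hf : Admissible c s0 r0 L1 N1 K1 L2 N2 K2 f1 f2) (hv : v ∈ Icc s0 r0) :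
    E1Integrand c s0 r0 L1 N1 K1 L2 N2 K2 f1 f2 v
      ≤ 2 * c.a * c.N1M / c.L1m * v ^ (-(2 * c.mu - 1))
        + c.D1 * c.K1M / (Hinf c s0 r0 * c.L1m) * v ^ (-(2 * c.mu + c.nu)) := by
  have hv0 : 0 < v := hf.pos.Icc_subset_Ioi hv
  have := hf.pos.Hinf_pos
  have := hf.Hinf_le_Hf
  have := hf.L_pos hv
  have := hf.K_pos hv
  obtain ⟨hL, -, -, hN, -, hK⟩ := hf.bounds hv
  obtain ⟨ha, -, -, -, -, -, hD1, -, -, -, -, hL1m, -, -, hN1M, -, hK1M, -⟩ := hf.pos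
  calc _ ≤ 2 * c.a * v * (c.N1M * v ^ (-c.mu) / (c.L1m * v ^ c.mu))
        + c.D1 / Hinf c s0 r0 * (c.K1M * v ^ (-c.mu) / (c.L1m * v ^ c.mu * v ^ c.nu)) := by
        unfold E1Integrand; gcongr
    _ = _ := by
        rw [show -(2 * c.mu - 1) = 1 + -c.mu + -c.mu by ring,
          show -(2 * c.mu + c.nu) = -c.mu + -c.mu + -c.nu by ring]
        simp only [Real.rpow_add hv0, Real.rpow_one, Real.rpow_neg hv0.le]
        field_simp

theorem continuousOn_E1Integrand (hf : Admissible c s0 r0 L1 N1 K1 L2 N2 K2 f1 f2) :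
    ContinuousOn (E1Integrand c s0 r0 L1 N1 K1 L2 N2 K2 f1 f2) (Icc s0 r0) := by
  obtain ⟨hL, hN, hK⟩ := hf.assum.1 f1 hf.mem1
  have hL0 : ∀ v ∈ Icc s0 r0, L1 f1 v ≠ 0 := fun v hv => (hf.L_pos hv).ne'
  refine ((continuousOn_const.mul continuousOn_id).mul (hN.div hL hL0)).add
    (continuousOn_const.mul ?_)
  simpa only [div_div, Pi.div_apply] using
    continuousOn_div_rpow c.nu hf.pos.Icc_subset_Ioi (hK.div hL hL0)

theorem integral_E1Integrand_nonneg (hf : Admissible c s0 r0 L1 N1 K1 L2 N2 K2 f1 f2)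
    (hη : η ∈ Icc s0 r0) : 0 ≤ ∫ v in s0..η, E1Integrand c s0 r0 L1 N1 K1 L2 N2 K2 f1 f2 v :=
  intervalIntegral.integral_nonneg hη.1 fun _ hv =>
    hf.E1Integrand_nonneg ⟨hv.1, hv.2.trans hη.2⟩

theorem E1f_le_one (hf : Admissible c s0 r0 L1 N1 K1 L2 N2 K2 f1 f2) (hη : η ∈ Icc s0 r0) :
    E1f c s0 r0 L1 N1 K1 L2 N2 K2 f1 f2 η ≤ 1 := by
  rw [E1f_eq_exp, Real.exp_le_one_iff, neg_nonpos]
  exact hf.integral_E1Integrand_nonneg hη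

theorem E1inf_le_E1f (hf : Admissible c s0 r0 L1 N1 K1 L2 N2 K2 f1 f2) (hη : η ∈ Icc s0 r0) :
    E1inf c s0 r0 ≤ E1f c s0 r0 L1 N1 K1 L2 N2 K2 f1 f2 η := by
  have := hf.pos.Hinf_pos
  obtain ⟨ha, hν, -, hμ, hs0, -, hD1, -, -, -, -, hL1m, -, -, hN1M, -, hK1M, -⟩ := hf.pos
  have hint := abs_integral_le_rpow_add_rpow (f := E1Integrand c s0 r0 L1 N1 K1 L2 N2 K2 f1 f2)
    (C := 2 * c.a * c.N1M / c.L1m) (D := c.D1 * c.K1M / (Hinf c s0 r0 * c.L1m)) hs0 hη.1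
    (by linarith : 1 < 2 * c.mu - 1) (by linarith : 1 < 2 * c.mu + c.nu) (by positivity)
    (by positivity) fun v hv => by
      have hv' : v ∈ Icc s0 r0 := ⟨hv.1, hv.2.trans hη.2⟩
      rw [abs_of_nonneg (hf.E1Integrand_nonneg hv')]
      exact hf.E1Integrand_le hv'
  rw [E1inf, E1infG, E1f_eq_exp, Real.exp_le_exp, neg_le_neg_iff]
  refine (le_abs_self _).trans (hint.trans_eq ?_)
  rw [show 2 * c.mu - 1 - 1 = 2 * c.mu - 2 by ring]
  field_simp

theorem continuousOn_E1f (hf : Admissible c s0 r0 L1 N1 K1 L2 N2 K2 f1 f2) :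
    ContinuousOn (E1f c s0 r0 L1 N1 K1 L2 N2 K2 f1 f2) (Icc s0 r0) := by
  obtain ⟨-, -, -, -, -, hsr, -⟩ := hf.pos
  have := intervalIntegral.continuousOn_primitive_interval
    ((hf.continuousOn_E1Integrand.integrableOn_Icc (μ := volume)).mono_set
      (uIcc_of_le hsr.le).subset)
  rw [uIcc_of_le hsr.le] at this
  exact Real.continuous_exp.comp_continuousOn this.neg

theorem abs_N_div_L_sub_le (hf : Admissible c s0 r0 L1 N1 K1 L2 N2 K2 f1 f2)
    (hg : Admissible c s0 r0 L1 N1 K1 L2 N2 K2 g1 g2) (hv : v ∈ Icc s0 r0) :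
    |N1 f1 v * (L1 f1 v)⁻¹ - N1 g1 v * (L1 g1 v)⁻¹|
      ≤ c.Nt1 * pairNorm s0 r0 f1 f2 g1 g2 * (c.L1m * v ^ c.mu)⁻¹
        + c.N1M * v ^ (-c.mu) * (c.Lt1 * pairNorm s0 r0 f1 f2 g1 g2 / (c.L1m * v ^ c.mu) ^ 2) :=
  abs_mul_sub_mul_le (hf.abs_inv_L_le hv) (hg.abs_N_le hv) (hf.lip hg hv).2.1
    (hf.abs_inv_L_sub_le hg hv)

theorem abs_K_div_HL_sub_le (hf : Admissible c s0 r0 L1 N1 K1 L2 N2 K2 f1 f2)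
    (hg : Admissible c s0 r0 L1 N1 K1 L2 N2 K2 g1 g2) (hv : v ∈ Icc s0 r0) :
    |K1 f1 v * ((Hf c s0 r0 L1 N1 K1 L2 N2 K2 f1 f2)⁻¹ * (L1 f1 v)⁻¹)
        - K1 g1 v * ((Hf c s0 r0 L1 N1 K1 L2 N2 K2 g1 g2)⁻¹ * (L1 g1 v)⁻¹)|
      ≤ c.Kt1 * v ^ (-c.mu) * pairNorm s0 r0 f1 f2 g1 g2
          * ((Hinf c s0 r0)⁻¹ * (c.L1m * v ^ c.mu)⁻¹)
        + c.K1M * v ^ (-c.mu)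
          * (Htil c s0 r0 * pairNorm s0 r0 f1 f2 g1 g2 / Hinf c s0 r0 ^ 2 * (c.L1m * v ^ c.mu)⁻¹
            + (Hinf c s0 r0)⁻¹
              * (c.Lt1 * pairNorm s0 r0 f1 f2 g1 g2 / (c.L1m * v ^ c.mu) ^ 2)) := by
  have hHinf := hf.pos.Hinf_pos
  have hHLf : |(Hf c s0 r0 L1 N1 K1 L2 N2 K2 f1 f2)⁻¹ * (L1 f1 v)⁻¹|
      ≤ (Hinf c s0 r0)⁻¹ * (c.L1m * v ^ c.mu)⁻¹ := by
    rw [abs_mul]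
    exact mul_le_mul (abs_inv_le_inv_of_le hHinf hf.Hinf_le_Hf) (hf.abs_inv_L_le hv)
      (abs_nonneg _) (inv_nonneg.2 hHinf.le)
  exact abs_mul_sub_mul_le hHLf (hg.abs_K_le hv) (hf.lip hg hv).2.2
    (abs_mul_sub_mul_le (hf.abs_inv_L_le hv) (abs_inv_le_inv_of_le hHinf hg.Hinf_le_Hf)
      (hf.abs_inv_Hf_sub_le hg) (hf.abs_inv_L_sub_le hg hv))

theorem abs_E1Integrand_sub_le (hf : Admissible c s0 r0 L1 N1 K1 L2 N2 K2 f1 f2)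
    (hg : Admissible c s0 r0 L1 N1 K1 L2 N2 K2 g1 g2) (hv : v ∈ Icc s0 r0) :
    |E1Integrand c s0 r0 L1 N1 K1 L2 N2 K2 f1 f2 v - E1Integrand c s0 r0 L1 N1 K1 L2 N2 K2 g1 g2 v|
      ≤ 2 * c.a * c.Nt1 / c.L1m * pairNorm s0 r0 f1 f2 g1 g2 * v ^ (-(c.mu - 1))
        + 2 * c.a * c.N1M * c.Lt1 / c.L1m ^ 2 * pairNorm s0 r0 f1 f2 g1 g2 * v ^ (-(3 * c.mu - 1))
        + c.D1 * (c.Kt1 + c.K1M * Htil c s0 r0 / Hinf c s0 r0) / (Hinf c s0 r0 * c.L1m)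
          * pairNorm s0 r0 f1 f2 g1 g2 * v ^ (-(2 * c.mu + c.nu))
        + c.D1 * c.K1M * c.Lt1 / (Hinf c s0 r0 * c.L1m ^ 2) * pairNorm s0 r0 f1 f2 g1 g2
          * v ^ (-(3 * c.mu + c.nu)) := by
  have hv0 : 0 < v := hf.pos.Icc_subset_Ioi hv
  have := hf.pos.Hinf_pos
  obtain ⟨ha, -, -, -, -, -, hD1, -⟩ := hf.pos
  have hsplit (k1 k2 : ℝ → ℝ) : E1Integrand c s0 r0 L1 N1 K1 L2 N2 K2 k1 k2 v
      = 2 * c.a * v * (N1 k1 v * (L1 k1 v)⁻¹) + c.D1 * (v ^ c.nu)⁻¹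
        * (K1 k1 v * ((Hf c s0 r0 L1 N1 K1 L2 N2 K2 k1 k2)⁻¹ * (L1 k1 v)⁻¹)) := by
    simp only [E1Integrand, div_eq_mul_inv, mul_inv]; ring
  rw [hsplit, hsplit, add_sub_add_comm, ← mul_sub, ← mul_sub]
  refine (abs_add_le _ _).trans ?_
  rw [abs_mul (2 * c.a * v), abs_mul (c.D1 * (v ^ c.nu)⁻¹),
    abs_of_pos (by positivity : 0 < 2 * c.a * v), abs_of_pos (by positivity : 0 < c.D1 * (v ^ c.nu)⁻¹)]
  refine (add_le_add (mul_le_mul_of_nonneg_left (hf.abs_N_div_L_sub_le hg hv) (by positivity))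
    (mul_le_mul_of_nonneg_left (hf.abs_K_div_HL_sub_le hg hv) (by positivity))).trans_eq ?_
  rw [show -(c.mu - 1) = 1 + -c.mu by ring,
    show -(3 * c.mu - 1) = 1 + -c.mu + -c.mu + -c.mu by ring,
    show -(2 * c.mu + c.nu) = -c.mu + -c.mu + -c.nu by ring,
    show -(3 * c.mu + c.nu) = -c.mu + -c.mu + -c.mu + -c.nu by ring]
  simp only [Real.rpow_add hv0, Real.rpow_one, Real.rpow_neg hv0.le]
  field_simp
  ring

theorem abs_E1f_sub_le (hf : Admissible c s0 r0 L1 N1 K1 L2 N2 K2 f1 f2)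
    (hg : Admissible c s0 r0 L1 N1 K1 L2 N2 K2 g1 g2) (hη : η ∈ Icc s0 r0) :
    |E1f c s0 r0 L1 N1 K1 L2 N2 K2 f1 f2 η - E1f c s0 r0 L1 N1 K1 L2 N2 K2 g1 g2 η|
      ≤ E1til c s0 r0 * pairNorm s0 r0 f1 f2 g1 g2 := by
  have := hf.pos.Hinf_pos
  have := hf.pos.Htil_nonneg
  have := pairNorm_nonneg s0 r0 f1 f2 g1 g2
  obtain ⟨ha, hν, -, hμ, hs0, -, hD1, -, -, -, -, hL1m, -, -, hN1M, -, hK1M, -, -, -, -, -, -,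
    hLt1, hNt1, hKt1, -⟩ := hf.pos
  have hsub : Icc s0 η ⊆ Icc s0 r0 := Icc_subset_Icc_right hη.2
  have hint (k1 k2 : ℝ → ℝ) (hk : Admissible c s0 r0 L1 N1 K1 L2 N2 K2 k1 k2) :
      IntervalIntegrable (E1Integrand c s0 r0 L1 N1 K1 L2 N2 K2 k1 k2) volume s0 η :=
    (hk.continuousOn_E1Integrand.mono hsub).intervalIntegrable_of_Icc hη.1
  rw [E1f_eq_exp, E1f_eq_exp]
  refine (abs_exp_neg_sub_exp_neg_le (hf.integral_E1Integrand_nonneg hη)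
    (hg.integral_E1Integrand_nonneg hη)).trans ?_
  rw [← intervalIntegral.integral_sub (hint f1 f2 hf) (hint g1 g2 hg)]
  refine (abs_integral_le_sum_rpow hs0 hη.1
    (p := ![c.mu - 1, 3 * c.mu - 1, 2 * c.mu + c.nu, 3 * c.mu + c.nu])
    (C := ![2 * c.a * c.Nt1 / c.L1m * pairNorm s0 r0 f1 f2 g1 g2,
      2 * c.a * c.N1M * c.Lt1 / c.L1m ^ 2 * pairNorm s0 r0 f1 f2 g1 g2,
      c.D1 * (c.Kt1 + c.K1M * Htil c s0 r0 / Hinf c s0 r0) / (Hinf c s0 r0 * c.L1m)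
        * pairNorm s0 r0 f1 f2 g1 g2,
      c.D1 * c.K1M * c.Lt1 / (Hinf c s0 r0 * c.L1m ^ 2) * pairNorm s0 r0 f1 f2 g1 g2])
    (by intro i; fin_cases i <;> simp <;> linarith)
    (by intro i; fin_cases i <;> simp <;> positivity)
    fun v hv => by
      simpa [Fin.sum_univ_succ, add_assoc] using hf.abs_E1Integrand_sub_le hg (hsub hv)).trans_eq ?_
  simp only [Fin.sum_univ_succ, Fin.sum_univ_zero, Fin.isValue, Matrix.cons_val_zero,
    Matrix.cons_val_succ, add_zero]
  rw [show c.mu - 1 - 1 = c.mu - 2 by ring, show 3 * c.mu - 1 - 1 = 3 * c.mu - 2 by ring, E1til,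
    E1tilG]
  have : c.mu - 2 ≠ 0 := by linarith
  have : 3 * c.mu - 2 ≠ 0 := by linarith
  have : 2 * c.mu + c.nu - 1 ≠ 0 := by linarith
  have : 3 * c.mu + c.nu - 1 ≠ 0 := by linarith
  field_simp
  ring

theorem H1Integrand_nonneg (hf : Admissible c s0 r0 L1 N1 K1 L2 N2 K2 f1 f2)
    (hv : v ∈ Icc s0 r0) : 0 ≤ H1Integrand c s0 r0 L1 N1 K1 L2 N2 K2 f1 f2 v :=
  div_nonneg (hf.K_pos hv).le
    (mul_nonneg (Real.rpow_nonneg (hf.pos.Icc_subset_Ioi hv).le _) (E1f_pos v).le)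

theorem abs_H1Integrand_le (hf : Admissible c s0 r0 L1 N1 K1 L2 N2 K2 f1 f2)
    (hv : v ∈ Icc s0 r0) :
    |H1Integrand c s0 r0 L1 N1 K1 L2 N2 K2 f1 f2 v|
      ≤ c.K1M / E1inf c s0 r0 * v ^ (-(c.mu + c.nu)) := by
  rw [H1Integrand_eq_div]
  refine abs_div_rpow_le _ (hf.pos.Icc_subset_Ioi hv) ?_
  rw [abs_mul, div_mul_eq_mul_div, div_eq_mul_inv]
  exact mul_le_mul (hf.abs_K_le hv) (abs_inv_le_inv_of_le (Real.exp_pos _) (hf.E1inf_le_E1f hv))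
    (abs_nonneg _) ((abs_nonneg _).trans (hf.abs_K_le hv))

theorem continuousOn_H1Integrand (hf : Admissible c s0 r0 L1 N1 K1 L2 N2 K2 f1 f2) :
    ContinuousOn (H1Integrand c s0 r0 L1 N1 K1 L2 N2 K2 f1 f2) (Icc s0 r0) := by
  simp_rw [funext H1Integrand_eq_div]
  exact continuousOn_div_rpow c.nu hf.pos.Icc_subset_Ioi ((hf.assum.1 f1 hf.mem1).2.2.mul
    (hf.continuousOn_E1f.inv₀ fun v _ => (E1f_pos v).ne'))

theorem H1f_nonneg (hf : Admissible c s0 r0 L1 N1 K1 L2 N2 K2 f1 f2) (hη : η ∈ Icc s0 r0) :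
    0 ≤ H1f c s0 r0 L1 N1 K1 L2 N2 K2 f1 f2 η :=
  intervalIntegral.integral_nonneg hη.1 fun _ hv => hf.H1Integrand_nonneg ⟨hv.1, hv.2.trans hη.2⟩

theorem H1f_le_H1sup (hf : Admissible c s0 r0 L1 N1 K1 L2 N2 K2 f1 f2) (hη : η ∈ Icc s0 r0) :
    H1f c s0 r0 L1 N1 K1 L2 N2 K2 f1 f2 η ≤ H1sup c s0 r0 := by
  have hEinf : 0 < E1inf c s0 r0 := Real.exp_pos _
  obtain ⟨-, hν, -, hμ, hs0, -, -, -, -, -, -, -, -, -, -, -, hK1M, -⟩ := hf.pos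
  refine (le_abs_self _).trans ((abs_integral_le_rpow hs0 hη.1 (by linarith : 1 < c.mu + c.nu)
    (by positivity) fun v hv => hf.abs_H1Integrand_le ⟨hv.1, hv.2.trans hη.2⟩).trans_eq ?_)
  rw [H1sup, H1supG, div_div, ← mul_assoc]
  rfl

theorem continuousOn_H1f (hf : Admissible c s0 r0 L1 N1 K1 L2 N2 K2 f1 f2) :
    ContinuousOn (H1f c s0 r0 L1 N1 K1 L2 N2 K2 f1 f2) (Icc s0 r0) := by
  obtain ⟨-, -, -, -, -, hsr, -⟩ := hf.pos
  have := intervalIntegral.continuousOn_primitive_interval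
    ((hf.continuousOn_H1Integrand.integrableOn_Icc (μ := volume)).mono_set
      (uIcc_of_le hsr.le).subset)
  rwa [uIcc_of_le hsr.le] at this

theorem abs_H1Integrand_sub_le (hf : Admissible c s0 r0 L1 N1 K1 L2 N2 K2 f1 f2)
    (hg : Admissible c s0 r0 L1 N1 K1 L2 N2 K2 g1 g2) (hv : v ∈ Icc s0 r0) :
    |H1Integrand c s0 r0 L1 N1 K1 L2 N2 K2 f1 f2 v - H1Integrand c s0 r0 L1 N1 K1 L2 N2 K2 g1 g2 v|
      ≤ (c.Kt1 + c.K1M * E1til c s0 r0 / E1inf c s0 r0) / E1inf c s0 r0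
        * pairNorm s0 r0 f1 f2 g1 g2 * v ^ (-(c.mu + c.nu)) := by
  have hEinf : 0 < E1inf c s0 r0 := Real.exp_pos _
  have hEf := abs_inv_le_inv_of_le hEinf (hf.E1inf_le_E1f hv)
  have hΔE := abs_inv_sub_inv_le hEinf (hf.E1inf_le_E1f hv) (hg.E1inf_le_E1f hv)
    (hf.abs_E1f_sub_le hg hv)
  rw [H1Integrand_eq_div, H1Integrand_eq_div, ← sub_div]
  refine abs_div_rpow_le _ (hf.pos.Icc_subset_Ioi hv)
    ((abs_mul_sub_mul_le hEf (hg.abs_K_le hv) (hf.lip hg hv).2.2 hΔE).trans_eq ?_)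
  field_simp

theorem abs_H1f_sub_le (hf : Admissible c s0 r0 L1 N1 K1 L2 N2 K2 f1 f2)
    (hg : Admissible c s0 r0 L1 N1 K1 L2 N2 K2 g1 g2) (hη : η ∈ Icc s0 r0) :
    |H1f c s0 r0 L1 N1 K1 L2 N2 K2 f1 f2 η - H1f c s0 r0 L1 N1 K1 L2 N2 K2 g1 g2 η|
      ≤ H1til c s0 r0 * pairNorm s0 r0 f1 f2 g1 g2 := by
  have hEinf : 0 < E1inf c s0 r0 := Real.exp_pos _
  have := hf.pos.E1til_nonneg
  have := pairNorm_nonneg s0 r0 f1 f2 g1 g2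
  obtain ⟨-, hν, -, hμ, hs0, -, -, -, -, -, -, -, -, -, -, -, hK1M, -, -, -, -, -, -, -, -,
    hKt1, -⟩ := hf.pos
  have hsub : Icc s0 η ⊆ Icc s0 r0 := Icc_subset_Icc_right hη.2
  have hint (k1 k2 : ℝ → ℝ) (hk : Admissible c s0 r0 L1 N1 K1 L2 N2 K2 k1 k2) :
      IntervalIntegrable (H1Integrand c s0 r0 L1 N1 K1 L2 N2 K2 k1 k2) volume s0 η :=
    (hk.continuousOn_H1Integrand.mono hsub).intervalIntegrable_of_Icc hη.1
  rw [H1f_eq_integral, H1f_eq_integral,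
    ← intervalIntegral.integral_sub (hint f1 f2 hf) (hint g1 g2 hg)]
  refine (abs_integral_le_rpow hs0 hη.1 (by linarith : 1 < c.mu + c.nu) (by positivity)
    fun v hv => hf.abs_H1Integrand_sub_le hg (hsub hv)).trans_eq ?_
  rw [H1til_eq]
  field_simp

theorem continuousOn_G1Integrand (hf : Admissible c s0 r0 L1 N1 K1 L2 N2 K2 f1 f2) :
    ContinuousOn (G1Integrand c s0 r0 L1 N1 K1 L2 N2 K2 f1 f2) (Icc s0 r0) := by
  simp_rw [funext G1Integrand_eq_div]
  exact continuousOn_div_rpow c.nu hf.pos.Icc_subset_Ioi (hf.continuousOn_H1f.mul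
    (hf.continuousOn_E1f.mul ((hf.assum.1 f1 hf.mem1).1.inv₀ fun v hv => (hf.L_pos hv).ne')))

theorem abs_G1Integrand_sub_le (hf : Admissible c s0 r0 L1 N1 K1 L2 N2 K2 f1 f2)
    (hg : Admissible c s0 r0 L1 N1 K1 L2 N2 K2 g1 g2) (hv : v ∈ Icc s0 r0) :
    |G1Integrand c s0 r0 L1 N1 K1 L2 N2 K2 f1 f2 v - G1Integrand c s0 r0 L1 N1 K1 L2 N2 K2 g1 g2 v|
      ≤ (H1sup c s0 r0 * E1til c s0 r0 + H1til c s0 r0) / c.L1m * pairNorm s0 r0 f1 f2 g1 g2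
          * v ^ (-(c.mu + c.nu))
        + H1sup c s0 r0 * c.Lt1 / c.L1m ^ 2 * pairNorm s0 r0 f1 f2 g1 g2
          * v ^ (-(2 * c.mu + c.nu)) := by
  have hv0 : 0 < v := hf.pos.Icc_subset_Ioi hv
  have hE (k1 k2 : ℝ → ℝ) (hk : Admissible c s0 r0 L1 N1 K1 L2 N2 K2 k1 k2) :
      |E1f c s0 r0 L1 N1 K1 L2 N2 K2 k1 k2 v| ≤ 1 := by
    rw [abs_of_pos (E1f_pos v)]; exact hk.E1f_le_one hv
  have hEL : |E1f c s0 r0 L1 N1 K1 L2 N2 K2 f1 f2 v * (L1 f1 v)⁻¹| ≤ (c.L1m * v ^ c.mu)⁻¹ := by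
    rw [abs_mul, ← one_mul (c.L1m * v ^ c.mu)⁻¹]
    exact mul_le_mul (hE f1 f2 hf) (hf.abs_inv_L_le hv) (abs_nonneg _) zero_le_one
  have hH1g : |H1f c s0 r0 L1 N1 K1 L2 N2 K2 g1 g2 v| ≤ H1sup c s0 r0 := by
    rw [abs_of_nonneg (hg.H1f_nonneg hv)]; exact hg.H1f_le_H1sup hv
  have hΔEL := abs_mul_sub_mul_le (hf.abs_inv_L_le hv) (hE g1 g2 hg) (hf.abs_E1f_sub_le hg hv)
    (hf.abs_inv_L_sub_le hg hv)
  have hΔ := abs_mul_sub_mul_le hEL hH1g (hf.abs_H1f_sub_le hg hv) hΔEL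
  rw [G1Integrand_eq_div, G1Integrand_eq_div, ← sub_div, abs_div,
    abs_of_pos (Real.rpow_pos_of_pos hv0 _)]
  refine (div_le_div_of_nonneg_right hΔ (Real.rpow_nonneg hv0.le _)).trans_eq ?_
  rw [show -(c.mu + c.nu) = -c.mu + -c.nu by ring,
    show -(2 * c.mu + c.nu) = -c.mu + -c.mu + -c.nu by ring]
  simp only [Real.rpow_add hv0, Real.rpow_neg hv0.le]
  field_simp
  ring

theorem abs_G1f_sub_le (hf : Admissible c s0 r0 L1 N1 K1 L2 N2 K2 f1 f2)
    (hg : Admissible c s0 r0 L1 N1 K1 L2 N2 K2 g1 g2) (hη : η ∈ Icc s0 r0) :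
    |G1f c s0 r0 L1 N1 K1 L2 N2 K2 f1 f2 η - G1f c s0 r0 L1 N1 K1 L2 N2 K2 g1 g2 η|
      ≤ G1til c s0 r0 * pairNorm s0 r0 f1 f2 g1 g2 := by
  have hEinf : 0 < E1inf c s0 r0 := Real.exp_pos _
  have := hf.pos.E1til_nonneg
  have := pairNorm_nonneg s0 r0 f1 f2 g1 g2
  have hH1sup : 0 ≤ H1sup c s0 r0 := (hf.H1f_nonneg hη).trans (hf.H1f_le_H1sup hη)
  have := hf.pos.H1til_nonneg
  obtain ⟨-, hν, -, hμ, hs0, -, -, -, -, -, -, hL1m, -, -, -, -, -, -, -, -, -, -, -,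
    hLt1, -⟩ := hf.pos
  have hsub : Icc s0 η ⊆ Icc s0 r0 := Icc_subset_Icc_right hη.2
  have hint (k1 k2 : ℝ → ℝ) (hk : Admissible c s0 r0 L1 N1 K1 L2 N2 K2 k1 k2) :
      IntervalIntegrable (G1Integrand c s0 r0 L1 N1 K1 L2 N2 K2 k1 k2) volume s0 η :=
    (hk.continuousOn_G1Integrand.mono hsub).intervalIntegrable_of_Icc hη.1
  rw [G1f_eq_integral, G1f_eq_integral,
    ← intervalIntegral.integral_sub (hint f1 f2 hf) (hint g1 g2 hg)]
  refine (abs_integral_le_rpow_add_rpow hs0 hη.1 (by linarith : 1 < c.mu + c.nu)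
    (by linarith : 1 < 2 * c.mu + c.nu) (by positivity) (by positivity)
    fun v hv => hf.abs_G1Integrand_sub_le hg (hsub hv)).trans_eq ?_
  have : c.mu + c.nu - 1 ≠ 0 := by linarith
  have : 2 * c.mu + c.nu - 1 ≠ 0 := by linarith
  rw [G1til_eq]
  field_simp
  ring

end Admissible

end Estimates

theorem stmt9 (c : Cst) (s0 r0 : ℝ) (L1 N1 K1 L2 N2 K2 : (ℝ → ℝ) → ℝ → ℝ)
    (hpos : PosC c s0 r0) (hA : Assum c s0 r0 L1 N1 K1 L2 N2 K2)
    (f1 f2 : ℝ → ℝ) (hf1 : f1 ∈ C1 s0 r0) (hf2 : f2 ∈ Mset r0)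
    (g1 g2 : ℝ → ℝ) (hg1 : g1 ∈ C1 s0 r0) (hg2 : g2 ∈ Mset r0) :
    ∀ η ∈ Set.Icc s0 r0,
      |G1f c s0 r0 L1 N1 K1 L2 N2 K2 f1 f2 η - G1f c s0 r0 L1 N1 K1 L2 N2 K2 g1 g2 η| ≤ G1til c s0 r0 * pairNorm s0 r0 f1 f2 g1 g2 :=
  fun _ hη => Admissible.abs_G1f_sub_le ⟨hpos, hA, hf1, hf2⟩ ⟨hpos, hA, hg1, hg2⟩ hη
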